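/- Let P = (X, ≤) be a finite poset, T = (X, ≤_T) a tree partition of P, and (T, ψ) any forest-based enforcement scheme. Then φ_T(x) ⊆ ψ(x) for all x ∈ X, where φ_T(x) = {γ_{xz} : z ∈ X, z ≤ x}. -/

import Mathlib

open scoped BigOperators

/-- `y` is covered by `x` in the explicit partial order `T` (i.e. `y ⋖_T x`). -/
def CovT {X : Type*} (T : PartialOrder X) (y x : X) : Prop :=
  T.lt y x ∧ ∀ z : X, T.lt y z → ¬ T.lt z x

/-- `T` is a tree partition of the ambient partial order on `X`:
every covering pair of `T` is a covering pair of the ambient order,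
and every element has at most one cover (parent) in `T`. -/
structure IsTreePartition {X : Type*} [PartialOrder X] (T : PartialOrder X) : Prop where
  cov_le : ∀ y x : X, CovT T y x → y ⋖ x
  parent_unique : ∀ z x x' : X, CovT T z x → CovT T z x' → x = x'

/-- `C` is a chain partition of the ambient partial order on `X`:
a tree partition in which, moreover, every element covers at most one element. -/
structure IsChainPartition {X : Type*} [PartialOrder X] (C : PartialOrder X) : Prop where
  cov_le : ∀ y x : X, CovT C y x → y ⋖ x
  parent_unique : ∀ z x x' : X, CovT C z x → CovT C z x' → x = x'
  child_unique : ∀ x z z' : X, CovT C z x → CovT C z' x → z = z'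

/-- The set `D(x,z) = {y : y ≤ x ∧ z ≤_T y}`. -/
def Dset {X : Type*} [PartialOrder X] (T : PartialOrder X) (x z : X) : Set X :=
  {y : X | y ≤ x ∧ T.le z y}

/-- `a` is the anchor `γ_{xz}`: the maximum (w.r.t. `≤_T`) element of `D(x,z)`. -/
def IsAnchor {X : Type*} [PartialOrder X] (T : PartialOrder X) (x z a : X) : Prop :=
  a ∈ Dset T x z ∧ ∀ y ∈ Dset T x z, T.le y a

/-- `φ_T(x) = {γ_{xz} : z ≤ x}`. -/
def phiT {X : Type*} [PartialOrder X] (T : PartialOrder X) (x : X) : Set X :=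
  {a : X | ∃ z : X, z ≤ x ∧ IsAnchor T x z a}

/- An anchor is `≤_T`-maximal among the elements below `x`, and property (2) of the scheme forces
every element of `ψ x` to lie below `x`; so the element of `ψ x` that property (1) puts
`≤_T`-above the anchor must be the anchor itself. -/

theorem IsAnchor.eq_of_le {X : Type*} [PartialOrder X] {T : PartialOrder X} {x z a w : X}
    (ha : IsAnchor T x z a) (hwx : w ≤ x) (haw : T.le a w) : w = a :=
  T.le_antisymm w a (ha.2 w ⟨hwx, T.le_trans z a w ha.1.2 haw⟩) haw

theorem le_of_mem_enforcement {X : Type*} [PartialOrder X] {T : PartialOrder X} {ψ : X → Set X}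
    (h2 : ∀ u x : X, ¬ u ≤ x → ∀ z ∈ ψ x, ¬ T.le u z) {x w : X} (hw : w ∈ ψ x) : w ≤ x := by
  by_contra hwx
  exact h2 w x hwx w hw (T.le_refl w)

theorem stmt4_general {X : Type*} [PartialOrder X]
    (T : PartialOrder X) (ψ : X → Set X)
    (h1 : ∀ u x : X, u ≤ x → ∃ z ∈ ψ x, T.le u z)
    (h2 : ∀ u x : X, ¬ u ≤ x → ∀ z ∈ ψ x, ¬ T.le u z) :
    ∀ x : X, phiT T x ⊆ ψ x := by
  rintro x a ⟨z, -, ha⟩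
  obtain ⟨w, hwψ, haw⟩ := h1 a x ha.1.1
  rwa [← ha.eq_of_le (le_of_mem_enforcement h2 hwψ) haw]

/-- `φ_T(x) ⊆ ψ(x)` for every forest-based enforcement scheme `(T, ψ)`. -/
theorem stmt4 {X : Type*} [Fintype X] [PartialOrder X]
    (T : PartialOrder X) (hT : IsTreePartition T) (ψ : X → Set X)
    (h1 : ∀ u x : X, u ≤ x → ∃ z ∈ ψ x, T.le u z)
    (h2 : ∀ u x : X, ¬ u ≤ x → ∀ z ∈ ψ x, ¬ T.le u z) :
    ∀ x : X, phiT T x ⊆ ψ x :=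
  stmt4_general T ψ h1 h2
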